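/- (Proposition 1) Let Y take values in a countable set and let X be a real-valued random variable such that for each value y of Y with P(Y = y) > 0, the conditional cumulative distribution function F_y(x) = P(X ≤ x | Y = y) is continuous in x. Define Z = F_Y(X), i.e., Z(ω) = F_{Y(ω)}(X(ω)). Then Z and Y are independent random variables, and Z is uniformly distributed on [0,1]. -/

import Mathlib

/-!
On the event `Y = y`, the variable `Z` equals `F_y(X)`, and `F_y` is the CDF of the conditional
law of `X` given `Y = y`. A continuous CDF pushes its own law forward to the uniform law on
`[0,1]` (probability integral transform): for each value `t < 1` of `F` the set `{F ≤ t}` is a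
half-line `(-∞, s]` with `F s = t`. So the conditional law of `Z` given `Y = y` is uniform for
every `y` of positive mass; a conditional law that does not depend on the value of the
countably-valued `Y` makes `Z` independent of `Y`, with that law as its marginal.
-/

open MeasureTheory ProbabilityTheory Set Filter Topology

theorem Monotone.exists_preimage_Iic_eq_Iic {α β : Type*} [ConditionallyCompleteLinearOrder α]
    [TopologicalSpace α] [OrderTopology α] [PartialOrder β] [TopologicalSpace β] [T1Space β]
    {f : α → β} (hmono : Monotone f) (hcont : Continuous f) {t : β} (ht : t ∈ range f)
    (hbdd : BddAbove (f ⁻¹' {t})) :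
    ∃ s, f s = t ∧ f ⁻¹' Iic t = Iic s := by
  have hs : f (sSup (f ⁻¹' {t})) = t :=
    (isClosed_singleton.preimage hcont).csSup_mem ht hbdd
  refine ⟨_, hs, Set.ext fun x => ⟨fun hx => ?_, fun hx => (hmono hx).trans hs.le⟩⟩
  change x ≤ _
  by_contra! hlt
  exact hlt.not_ge (le_csSup hbdd (le_antisymm hx (hs ▸ hmono hlt.le)))

theorem map_cdf_eq_volume_restrict_Icc (μ : Measure ℝ) [IsProbabilityMeasure μ]
    (hcont : Continuous (cdf μ)) :
    μ.map (cdf μ) = volume.restrict (Icc 0 1) := by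
  have hmeas := hcont.measurable
  have := Measure.isProbabilityMeasure_map (μ := μ) hmeas.aemeasurable
  refine Measure.ext_of_Iic _ _ fun t => ?_
  have hIcc : Iic t ∩ Icc 0 1 = Icc 0 (min t 1) := by
    ext x
    simp only [mem_inter_iff, mem_Iic, mem_Icc, le_min_iff]
    tauto
  rw [Measure.map_apply hmeas measurableSet_Iic, Measure.restrict_apply measurableSet_Iic, hIcc,
    Real.volume_Icc, sub_zero]
  rcases le_or_gt 1 t with h1 | h1
  · have : cdf μ ⁻¹' Iic t = univ := eq_univ_of_forall fun x => (cdf_le_one μ x).trans h1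
    rw [this, measure_univ, min_eq_right h1, ENNReal.ofReal_one]
  rw [min_eq_left h1.le]
  by_cases hrange : t ∈ range (cdf μ)
  · obtain ⟨x₀, hx₀⟩ := ((tendsto_cdf_atTop μ).eventually (eventually_gt_nhds h1)).exists
    have hbdd : BddAbove (cdf μ ⁻¹' {t}) :=
      ⟨x₀, fun x (hx : cdf μ x = t) => ((monotone_cdf μ).reflect_lt (hx ▸ hx₀)).le⟩
    obtain ⟨s, rfl, hpre⟩ := (monotone_cdf μ).exists_preimage_Iic_eq_Iic hcont hrange hbdd
    rw [hpre, ofReal_cdf]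
  · have ht0 : t ≤ 0 := by
      by_contra! ht0
      exact hrange (mem_range_of_exists_le_of_exists_ge hcont
        ((tendsto_cdf_atBot μ).eventually (eventually_le_nhds ht0)).exists
        ((tendsto_cdf_atTop μ).eventually (eventually_ge_nhds h1)).exists)
    have : cdf μ ⁻¹' Iic t = ∅ := eq_empty_of_forall_notMem fun x hx =>
      hrange ⟨x, le_antisymm hx (ht0.trans (cdf_nonneg μ x))⟩
    simp [this, ENNReal.ofReal_of_nonpos ht0]

theorem cdf_map_cond_apply {Ω : Type*} [MeasurableSpace Ω] (P : Measure Ω) [IsFiniteMeasure P]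
    {X : Ω → ℝ} (hX : Measurable X) {s : Set Ω} (hs : MeasurableSet s) (hPs : P s ≠ 0)
    (x : ℝ) :
    cdf ((P[|s]).map X) x = P.real (X ⁻¹' Iic x ∩ s) / P.real s := by
  have := cond_isProbabilityMeasure hPs
  have := Measure.isProbabilityMeasure_map (μ := P[|s]) hX.aemeasurable
  rw [cdf_eq_real, measureReal_def, Measure.map_apply hX measurableSet_Iic, cond_apply hs,
    ENNReal.toReal_mul, ENNReal.toReal_inv, inter_comm, div_eq_inv_mul, measureReal_def,
    measureReal_def]

theorem indepFun_and_map_eq_of_map_cond_preimage_singleton {Ω T β : Type*} [MeasurableSpace Ω]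
    [MeasurableSpace T] [MeasurableSingletonClass T] [Countable T] [MeasurableSpace β]
    {P : Measure Ω} [IsProbabilityMeasure P] {Z : Ω → β} {Y : Ω → T} (hZ : Measurable Z)
    (hY : Measurable Y) {ν : Measure β}
    (h : ∀ y, P (Y ⁻¹' {y}) ≠ 0 → (P[|Y ⁻¹' {y}]).map Z = ν) :
    IndepFun Z Y P ∧ P.map Z = ν := by
  have hfiber : ∀ {A} y, MeasurableSet A →
      P (Z ⁻¹' A ∩ Y ⁻¹' {y}) = ν A * P (Y ⁻¹' {y}) := by
    intro A y hA
    rcases eq_or_ne (P (Y ⁻¹' {y})) 0 with hy | hy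
    · rw [hy, mul_zero, measure_inter_null_of_null_right _ hy]
    · rw [← h y hy, Measure.map_apply hZ hA, cond_mul_eq_inter (hY (measurableSet_singleton y)),
        inter_comm]
  have hprod : ∀ {A B}, MeasurableSet A →
      P (Z ⁻¹' A ∩ Y ⁻¹' B) = ν A * P (Y ⁻¹' B) := by
    intro A B hA
    have hsingle : ∀ y ∈ B, MeasurableSet (Y ⁻¹' {y}) :=
      fun y _ => hY (measurableSet_singleton y)
    calc P (Z ⁻¹' A ∩ Y ⁻¹' B) = P.restrict (Z ⁻¹' A) (Y ⁻¹' B) := by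
          rw [Measure.restrict_apply' (hZ hA), inter_comm]
      _ = ∑' y : B, P.restrict (Z ⁻¹' A) (Y ⁻¹' {(y : T)}) :=
          (tsum_measure_preimage_singleton B.to_countable hsingle).symm
      _ = ∑' y : B, ν A * P (Y ⁻¹' {(y : T)}) := tsum_congr fun y => by
          rw [Measure.restrict_apply' (hZ hA), inter_comm, hfiber y hA]
      _ = ν A * P (Y ⁻¹' B) := by
          rw [ENNReal.tsum_mul_left, tsum_measure_preimage_singleton B.to_countable hsingle]
  have hmap : P.map Z = ν := Measure.ext fun A hA => by
    simpa [Measure.map_apply hZ hA] using hprod (B := univ) hA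
  refine ⟨(indepFun_iff_measure_inter_preimage_eq_mul).2 fun A B hA _ => ?_, hmap⟩
  rw [hprod hA, ← hmap, Measure.map_apply hZ hA]

/-- Proposition 1: if for each value `y` of a countably-valued random variable `Y` with
`P(Y = y) > 0` the conditional CDF `F y` of `X` given `Y = y` is continuous, then
`Z = F_Y(X)` is independent of `Y` and uniformly distributed on `[0,1]`. -/
theorem quantile_mapping_indep_and_uniform
    {Ω T : Type*} [MeasurableSpace Ω] [MeasurableSpace T] [MeasurableSingletonClass T]
    [Countable T]
    (P : Measure Ω) [IsProbabilityMeasure P]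
    (X : Ω → ℝ) (hX : Measurable X) (Y : Ω → T) (hY : Measurable Y)
    (F : T → ℝ → ℝ) (hFmeas : Measurable (Function.uncurry F))
    (hF : ∀ y x, F y x = (P {ω | X ω ≤ x ∧ Y ω = y}).toReal / (P {ω | Y ω = y}).toReal)
    (hFcont : ∀ y, P {ω | Y ω = y} ≠ 0 → Continuous (F y)) :
    IndepFun (fun ω => F (Y ω) (X ω)) Y P ∧
      Measure.map (fun ω => F (Y ω) (X ω)) P
        = (volume : Measure ℝ).restrict (Set.Icc (0 : ℝ) 1) := by
  refine indepFun_and_map_eq_of_map_cond_preimage_singleton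
    (hFmeas.comp (hY.prodMk hX)) hY fun y hy => ?_
  have hYy : MeasurableSet (Y ⁻¹' {y}) := hY (measurableSet_singleton y)
  have hFy : F y = cdf ((P[|Y ⁻¹' {y}]).map X) :=
    funext fun x => by rw [hF, cdf_map_cond_apply P hX hYy hy]; rfl
  have := cond_isProbabilityMeasure hy
  have := Measure.isProbabilityMeasure_map (μ := P[|Y ⁻¹' {y}]) hX.aemeasurable
  calc (P[|Y ⁻¹' {y}]).map (fun ω => F (Y ω) (X ω))
      = ((P[|Y ⁻¹' {y}]).map X).map (F y) := by
        rw [Measure.map_map (hFcont y hy).measurable hX]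
        exact Measure.map_congr <| (ae_cond_mem hYy).mono fun ω (hω : Y ω = y) => by
          simp [hω]
    _ = volume.restrict (Icc 0 1) :=
        hFy ▸ map_cdf_eq_volume_restrict_Icc _ (hFy ▸ hFcont y hy)
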